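/- Let G ≤ Aut(X*), with X = {0,1}, be a self-similar group of binary rooted tree automorphisms. Then G acts transitively on every level of the tree (i.e., on the set of words of length n for every n) if and only if G is infinite. -/

import Mathlib

/-!
A finite group cannot be transitive on level `|G|`, which has `2 ^ |G| > |G|` words.

Conversely, suppose `G` is transitive on level `n` but not on level `n + 1`. If some `g ∈ G`
fixed all words of length `≤ n` but swapped the two children of a word `v` of length `n`, then,
composing with elements that move `v` around level `n`, any word of length `n + 1` could be sent
to any other one. Hence an element fixing the words of length `≤ n` also fixes those of length
`n + 1`. Its sections then fix the words of length `≤ n` again, and by self-similarity and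
induction on the word length such an element is trivial. So `G` acts faithfully on the finite
set of words of length `≤ n` and is finite.
-/

/-- `f` is an automorphism of the binary rooted tree `X* = List Bool`: a permutation of
the set of finite binary words preserving word length and the prefix relation. -/
def IsTreeAut (f : Equiv.Perm (List Bool)) : Prop :=
  (∀ v : List Bool, (f v).length = v.length) ∧
    ∀ v w : List Bool, v <+: w → f v <+: f w

/-- A subgroup of the permutations of `X* = List Bool` is self-similar if for every
element `g`, every letter `x` admits a letter `y` and an element `h` of the group with
`g(xw) = y h(w)` for every word `w` (i.e. all sections of elements belong to the
group). -/
def IsSelfSimilar (G : Subgroup (Equiv.Perm (List Bool))) : Prop :=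
  ∀ g ∈ G, ∀ x : Bool, ∃ y : Bool, ∃ h ∈ G, ∀ w : List Bool, g (x :: w) = y :: h w

theorem Bool.perm_apply_eq_not_of_apply_ne {σ : Equiv.Perm Bool} {x : Bool} (hx : σ x ≠ x)
    (z : Bool) : σ z = !z := by
  revert σ x z
  decide

namespace IsTreeAut

variable {f : Equiv.Perm (List Bool)}

theorem map_append_singleton (hf : IsTreeAut f) (v : List Bool) (x : Bool) :
    ∃ y, f (v ++ [x]) = f v ++ [y] := by
  obtain ⟨t, ht⟩ := hf.2 v (v ++ [x]) (List.prefix_append v [x])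
  have ht_len : t.length = 1 := by
    have := hf.1 (v ++ [x])
    rw [← ht, List.length_append, hf.1 v, List.length_append, List.length_singleton] at this
    omega
  obtain ⟨y, rfl⟩ := List.length_eq_one_iff.mp ht_len
  exact ⟨y, ht.symm⟩

theorem exists_perm_map_append_singleton (hf : IsTreeAut f) (v : List Bool) :
    ∃ σ : Equiv.Perm Bool, ∀ x, f (v ++ [x]) = f v ++ [σ x] := by
  choose σ hσ using hf.map_append_singleton v
  have hσ_inj : Function.Injective σ := fun x x' h => by
    have hfx : f (v ++ [x]) = f (v ++ [x']) := by rw [hσ, hσ, h]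
    exact List.singleton_inj.mp (List.append_cancel_left (f.injective hfx))
  exact ⟨Equiv.ofBijective σ (Finite.injective_iff_bijective.mp hσ_inj), hσ⟩

end IsTreeAut

def IsTransitiveOnLevel (G : Subgroup (Equiv.Perm (List Bool))) (n : ℕ) : Prop :=
  ∀ v w : List Bool, v.length = n → w.length = n → ∃ g ∈ G, g v = w

def FixesUpToLevel (n : ℕ) (g : Equiv.Perm (List Bool)) : Prop :=
  ∀ u : List Bool, u.length ≤ n → g u = u

section

variable {G : Subgroup (Equiv.Perm (List Bool))}

theorem forall_isTransitiveOnLevel_iff :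
    (∀ n, IsTransitiveOnLevel G n) ↔
      ∀ v w : List Bool, v.length = w.length → ∃ g ∈ G, g v = w :=
  ⟨fun h v w hvw => h _ v w rfl hvw.symm, fun h _ v w hv hw => h v w (hv.trans hw.symm)⟩

theorem isTransitiveOnLevel_zero : IsTransitiveOnLevel G 0 := fun v w hv hw =>
  ⟨1, one_mem G, by simp [List.length_eq_zero_iff.mp hv, List.length_eq_zero_iff.mp hw]⟩

theorem exists_isTransitiveOnLevel_and_not_succ (h : ¬ ∀ n, IsTransitiveOnLevel G n) :
    ∃ n, IsTransitiveOnLevel G n ∧ ¬ IsTransitiveOnLevel G (n + 1) := by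
  by_contra! hstep
  exact h fun n => Nat.rec isTransitiveOnLevel_zero hstep n

theorem not_isTransitiveOnLevel_card [Finite G] : ¬ IsTransitiveOnLevel G (Nat.card G) := by
  intro htrans
  choose g hgG hg using fun w : Fin (Nat.card G) → Bool =>
    htrans (List.replicate (Nat.card G) false) (List.ofFn w) (by simp) (by simp)
  have hinj : Function.Injective fun w => (⟨g w, hgG w⟩ : G) := fun w w' hww' =>
    List.ofFn_injective (by rw [← hg w, ← hg w', show g w = g w' from congrArg Subtype.val hww'])
  have hcard := Nat.card_le_card_of_injective _ hinj
  exact Nat.lt_two_pow_self.not_ge (by simpa using hcard)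

theorem isTransitiveOnLevel_succ (hG : ∀ g ∈ G, IsTreeAut g) {n : ℕ}
    (hn : IsTransitiveOnLevel G n) {v : List Bool} (hv : v.length = n)
    (hchildren : ∀ x y : Bool, ∃ g ∈ G, g (v ++ [x]) = v ++ [y]) :
    IsTransitiveOnLevel G (n + 1) := by
  intro a b ha hb
  obtain ⟨a, p, rfl⟩ := a.eq_nil_or_concat'.resolve_left (by rintro rfl; simp at ha)
  obtain ⟨b, q, rfl⟩ := b.eq_nil_or_concat'.resolve_left (by rintro rfl; simp at hb)
  obtain ⟨h, hh, hav⟩ := hn a v (by simpa using ha) hv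
  obtain ⟨p', hp'⟩ := (hG h hh).map_append_singleton a p
  obtain ⟨k, hk, hkv⟩ := hn v b hv (by simpa using hb)
  obtain ⟨σ, hσ⟩ := (hG k hk).exists_perm_map_append_singleton v
  obtain ⟨g, hg, hgp⟩ := hchildren p' (σ.symm q)
  refine ⟨k * g * h, mul_mem (mul_mem hk hg) hh, ?_⟩
  simp only [Equiv.Perm.mul_apply, hp', hav, hgp, hσ, hkv, Equiv.apply_symm_apply]

theorem fixesUpToLevel_succ (hG : ∀ g ∈ G, IsTreeAut g) {n : ℕ} (hn : IsTransitiveOnLevel G n)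
    (hn_succ : ¬ IsTransitiveOnLevel G (n + 1)) {g : Equiv.Perm (List Bool)} (hg : g ∈ G)
    (hfix : FixesUpToLevel n g) : FixesUpToLevel (n + 1) g := by
  intro u hu
  obtain hu | hu := hu.lt_or_eq
  · exact hfix u (Nat.lt_succ_iff.mp hu)
  obtain ⟨v, x, rfl⟩ := u.eq_nil_or_concat'.resolve_left (by rintro rfl; simp at hu)
  have hv : v.length = n := by simpa using hu
  obtain ⟨σ, hσ⟩ := (hG g hg).exists_perm_map_append_singleton v
  rw [hfix v hv.le] at hσ
  by_contra hx
  refine hn_succ (isTransitiveOnLevel_succ hG hn hv fun z z' => ?_)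
  rcases Bool.eq_or_eq_not z' z with rfl | rfl
  · exact ⟨1, one_mem G, rfl⟩
  · refine ⟨g, hg, ?_⟩
    rw [hσ, Bool.perm_apply_eq_not_of_apply_ne (fun h => hx (by rw [hσ, h])) z]

theorem eq_one_of_fixesUpToLevel (hss : IsSelfSimilar G) {n : ℕ}
    (hstep : ∀ g ∈ G, FixesUpToLevel n g → FixesUpToLevel (n + 1) g) :
    ∀ g ∈ G, FixesUpToLevel n g → g = 1 := by
  suffices ∀ u : List Bool, ∀ g ∈ G, FixesUpToLevel n g → g u = u from
    fun g hg hfix => Equiv.ext fun u => this u g hg hfix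
  intro u
  induction u with
  | nil => exact fun g _ hfix => hfix [] (Nat.zero_le n)
  | cons x w ih =>
    intro g hg hfix
    obtain ⟨y, h, hh, hsec⟩ := hss g hg x
    have hxu : ∀ u : List Bool, u.length ≤ n → x :: u = y :: h u := fun u hu => by
      rw [← hsec, hstep g hg hfix (x :: u) (by simpa using hu)]
    have hyx : y = x := (List.cons.inj (hxu [] (Nat.zero_le n))).1.symm
    have hh_fix : FixesUpToLevel n h := fun u hu => (List.cons.inj (hxu u hu)).2.symm
    rw [hsec, ih h hh hh_fix, hyx]

theorem finite_of_fixesUpToLevel_eq_one (hlen : ∀ g ∈ G, ∀ v : List Bool, (g v).length = v.length)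
    (n : ℕ) (hrig : ∀ g ∈ G, FixesUpToLevel n g → g = 1) : Finite G := by
  have : Finite {u : List Bool // u.length ≤ n} := (List.finite_length_le Bool n).to_subtype
  let restrict (g : G) (u : {u : List Bool // u.length ≤ n}) : {u : List Bool // u.length ≤ n} :=
    ⟨g.1 u, (hlen g.1 g.2 u).trans_le u.2⟩
  refine Finite.of_injective restrict fun a b hab => Subtype.ext ?_
  refine inv_mul_eq_one.mp (hrig _ (mul_mem (inv_mem a.2) b.2) fun u hu => ?_)
  have hu_ab : a.1 u = b.1 u := congrArg Subtype.val (congrFun hab ⟨u, hu⟩)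
  simp [Equiv.Perm.mul_apply, ← hu_ab]

theorem finite_of_not_forall_isTransitiveOnLevel (hG : ∀ g ∈ G, IsTreeAut g)
    (hss : IsSelfSimilar G) (h : ¬ ∀ n, IsTransitiveOnLevel G n) : Finite G := by
  obtain ⟨n, hn, hn_succ⟩ := exists_isTransitiveOnLevel_and_not_succ h
  exact finite_of_fixesUpToLevel_eq_one (fun g hg => (hG g hg).1) n
    (eq_one_of_fixesUpToLevel hss fun _ hg => fixesUpToLevel_succ hG hn hn_succ hg)

end

theorem self_similar_level_transitive_iff_infinite
    (G : Subgroup (Equiv.Perm (List Bool)))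
    (hG : ∀ g ∈ G, IsTreeAut g) (hss : IsSelfSimilar G) :
    (∀ v w : List Bool, v.length = w.length → ∃ g ∈ G, g v = w) ↔ Infinite G := by
  rw [← forall_isTransitiveOnLevel_iff, ← not_finite_iff_infinite]
  constructor
  · intro htrans _
    exact not_isTransitiveOnLevel_card (htrans _)
  · intro hinf
    by_contra htrans
    exact hinf (finite_of_not_forall_isTransitiveOnLevel hG hss htrans)
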